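/- If x ∈ J is singular, then for all t ∈ H and all a, b ∈ N the element t·a·x·b·t⁻¹ is singular; consequently every element of the G̃-orbit of a singular element of J is singular, and every element of the G̃-orbit of a regular element of J is regular. -/

import Mathlib

/-- An element `x` (of the radical `J`) is *singular* if there is an idempotent `e ≠ 1`
of the algebra with `e * x = x * e = x`; otherwise it is *regular*. -/
def IsSingular {A : Type*} [Ring A] (x : A) : Prop :=
  ∃ e : A, IsIdempotentElem e ∧ e ≠ 1 ∧ e * x = x ∧ x * e = x

/-- `x, y ∈ J` lie in the same `G̃`-orbit: `y = t * a * x * b * t⁻¹` with `t ∈ H = S^×`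
(both `t` and `t⁻¹` lie in `S`) and `a, b ∈ N = 1 + J`. -/
def SameOrbitJ {F A : Type*} [Field F] [Ring A] [Algebra F A]
    (J : Ideal A) (S : Subalgebra F A) (x y : A) : Prop :=
  ∃ t : Aˣ, (t : A) ∈ S ∧ ((t⁻¹ : Aˣ) : A) ∈ S ∧
    ∃ a b : A, a - 1 ∈ J ∧ b - 1 ∈ J ∧
      y = (t : A) * a * x * b * ((t⁻¹ : Aˣ) : A)

/-! `x` is singular iff some nonzero idempotent `h` annihilates it on both sides (take `h = 1 - e`).
Conjugating by a unit transports `h`. For `u * x * v` with `u, v ∈ 1 + J`, the idempotents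
`f = u h u⁻¹` and `g = v⁻¹ h v` annihilate it on the left and on the right respectively, and both are
congruent to `h` modulo `J`. Hence `f g f` is invertible in the corner ring `f A f`, and
`ε = g (f g f)⁻¹ f` is an idempotent of `g A f` with `f ε = f ≠ 0`, which annihilates `u * x * v` on
both sides. -/

namespace Ideal

variable {R : Type*} [Ring R]

/-- A noncommutative version of `Ideal.isUnit_of_sub_one_mem_jacobson_bot`. -/
theorem isUnit_of_sub_one_mem_jacobson_bot' {r : R} (h : r - 1 ∈ (⊥ : Ideal R).jacobson) :
    IsUnit r := by
  obtain ⟨s, hs⟩ := exists_mul_sub_mem_of_sub_one_mem_jacobson r h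
  rw [mem_bot, sub_eq_zero] at hs
  have hs1 : s - 1 ∈ (⊥ : Ideal R).jacobson := by
    have : s - 1 = -(s * (r - 1)) := by rw [mul_sub, hs, mul_one, neg_sub]
    exact this ▸ neg_mem (mul_mem_left _ s h)
  obtain ⟨s', hs'⟩ := exists_mul_sub_mem_of_sub_one_mem_jacobson s hs1
  rw [mem_bot, sub_eq_zero] at hs'
  have hs'r : s' = r := by rw [← mul_one s', ← hs, ← mul_assoc, hs', one_mul]
  exact isUnit_iff_exists.mpr ⟨s, hs'r ▸ hs', hs⟩

theorem exists_isIdempotentElem_of_sub_mem_jacobson_bot {f g : R} (hf : IsIdempotentElem f)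
    (hg : IsIdempotentElem g) (hfg : g - f ∈ (⊥ : Ideal R).jacobson) :
    ∃ ε : R, IsIdempotentElem ε ∧ g * ε = ε ∧ ε * f = ε ∧ f * ε = f := by
  set j := f * (g - f) * f
  obtain ⟨w, hw⟩ := isUnit_of_sub_one_mem_jacobson_bot' (r := 1 + j) (by
    simpa only [add_sub_cancel_left] using mul_mem_right f _ (mul_mem_left _ f hfg))
  have hj : j = f * g * f - f := by simp only [j, mul_sub, sub_mul, hf.eq]
  have hfgf : f * g * f = w * f := by
    rw [hw, hj, add_mul, sub_mul, mul_assoc (f * g), hf.eq, one_mul, add_sub_cancel]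
  have hfw : Commute f ((w⁻¹ : Rˣ) : R) := by
    refine Commute.units_inv_right ?_
    rw [Commute, SemiconjBy, hw, hj, mul_add, mul_sub, add_mul, sub_mul, ← mul_assoc,
      ← mul_assoc, hf.eq, mul_assoc (f * g), hf.eq, mul_one, one_mul]
  have hfε : f * (g * ((w⁻¹ : Rˣ) : R) * f) = f := by
    rw [mul_assoc g, ← hfw.eq, ← mul_assoc, ← mul_assoc, hfgf, mul_assoc, hfw.eq,
      Units.mul_inv_cancel_left]
  refine ⟨g * ((w⁻¹ : Rˣ) : R) * f, ?_, ?_, ?_, hfε⟩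
  · rw [IsIdempotentElem, mul_assoc (g * _), hfε]
  · rw [← mul_assoc, ← mul_assoc, hg.eq]
  · rw [mul_assoc, hf.eq]

end Ideal

namespace Units

variable {R : Type*} [Ring R] {I : Ideal R} {u : Rˣ}

theorem inv_sub_one_mem (hu : (u : R) - 1 ∈ I) : ((u⁻¹ : Rˣ) : R) - 1 ∈ I := by
  have : ((u⁻¹ : Rˣ) : R) - 1 = -(((u⁻¹ : Rˣ) : R) * ((u : R) - 1)) := by
    rw [mul_sub, Units.inv_mul, mul_one, neg_sub]
  exact this ▸ neg_mem (I.mul_mem_left _ hu)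

theorem conj_sub_mem [I.IsTwoSided] (hu : (u : R) - 1 ∈ I) (r : R) :
    (u : R) * r * ((u⁻¹ : Rˣ) : R) - r ∈ I := by
  have : (u : R) * r * ((u⁻¹ : Rˣ) : R) - r =
      (((u : R) - 1) * r - r * ((u : R) - 1)) * ((u⁻¹ : Rˣ) : R) := by
    simp only [sub_mul, mul_sub, one_mul, mul_one, mul_assoc, Units.mul_inv]
    abel
  exact this ▸ I.mul_mem_right _ (sub_mem (I.mul_mem_right _ hu) (I.mul_mem_left _ hu))

theorem conj_ne_zero {r : R} (hr : r ≠ 0) (u : Rˣ) : (u : R) * r * ((u⁻¹ : Rˣ) : R) ≠ 0 :=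
  fun h0 => hr (by simpa [mul_assoc] using congrArg (((u⁻¹ : Rˣ) : R) * · * (u : R)) h0)

end Units

theorem IsIdempotentElem.units_conj {R : Type*} [Ring R] {e : R} (he : IsIdempotentElem e)
    (u : Rˣ) : IsIdempotentElem ((u : R) * e * ((u⁻¹ : Rˣ) : R)) := by
  simp only [IsIdempotentElem, mul_assoc, Units.inv_mul_cancel_left, ← mul_assoc e e, he.eq]

section Singular

variable {A : Type*} [Ring A] {x : A}

theorem isSingular_iff :
    IsSingular x ↔ ∃ h : A, IsIdempotentElem h ∧ h ≠ 0 ∧ h * x = 0 ∧ x * h = 0 := by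
  constructor
  · rintro ⟨e, he, he1, hex, hxe⟩
    refine ⟨1 - e, he.one_sub, sub_ne_zero.mpr he1.symm, ?_, ?_⟩
    · rw [sub_mul, one_mul, hex, sub_self]
    · rw [mul_sub, mul_one, hxe, sub_self]
  · rintro ⟨h, hh, hh0, hhx, hxh⟩
    refine ⟨1 - h, hh.one_sub, fun h1 => hh0 ?_, ?_, ?_⟩
    · rwa [sub_eq_self] at h1
    · rw [sub_mul, one_mul, hhx, sub_zero]
    · rw [mul_sub, mul_one, hxh, sub_zero]

theorem IsSingular.units_conj (hx : IsSingular x) (u : Aˣ) :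
    IsSingular ((u : A) * x * ((u⁻¹ : Aˣ) : A)) := by
  obtain ⟨h, hh, hh0, hhx, hxh⟩ := isSingular_iff.mp hx
  refine isSingular_iff.mpr ⟨_, hh.units_conj u, Units.conj_ne_zero hh0 u, ?_, ?_⟩
  · simp only [mul_assoc, Units.inv_mul_cancel_left]
    rw [← mul_assoc h, hhx, zero_mul, mul_zero]
  · simp only [mul_assoc, Units.inv_mul_cancel_left]
    rw [← mul_assoc x, hxh, zero_mul, mul_zero]

theorem isSingular_units_conj_iff (u : Aˣ) :
    IsSingular ((u : A) * x * ((u⁻¹ : Aˣ) : A)) ↔ IsSingular x :=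
  ⟨fun h => by simpa [mul_assoc] using h.units_conj u⁻¹, fun h => h.units_conj u⟩

theorem IsSingular.units_mul_mul (hx : IsSingular x) {u v : Aˣ}
    (hu : (u : A) - 1 ∈ (⊥ : Ideal A).jacobson) (hv : (v : A) - 1 ∈ (⊥ : Ideal A).jacobson) :
    IsSingular ((u : A) * x * v) := by
  obtain ⟨h, hh, hh0, hhx, hxh⟩ := isSingular_iff.mp hx
  have hgf : ((v⁻¹ : Aˣ) : A) * h * v - (u : A) * h * ((u⁻¹ : Aˣ) : A) ∈
      (⊥ : Ideal A).jacobson := by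
    rw [← sub_sub_sub_cancel_right _ _ h, ← inv_inv v]
    exact sub_mem (Units.conj_sub_mem (Units.inv_sub_one_mem hv) h) (Units.conj_sub_mem hu h)
  obtain ⟨ε, hε, hgε, hεf, hfε⟩ := Ideal.exists_isIdempotentElem_of_sub_mem_jacobson_bot
    (hh.units_conj u) (inv_inv v ▸ hh.units_conj v⁻¹) hgf
  refine isSingular_iff.mpr ⟨ε, hε, fun h0 => Units.conj_ne_zero hh0 u ?_, ?_, ?_⟩
  · rw [← hfε, h0, mul_zero]
  · rw [← hεf]
    simp only [mul_assoc, Units.inv_mul_cancel_left]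
    rw [← mul_assoc h, hhx, zero_mul, mul_zero, mul_zero]
  · rw [← hgε]
    simp only [mul_assoc, Units.mul_inv_cancel_left]
    rw [← mul_assoc x, hxh, zero_mul, mul_zero]

theorem isSingular_units_mul_mul_iff {u v : Aˣ}
    (hu : (u : A) - 1 ∈ (⊥ : Ideal A).jacobson) (hv : (v : A) - 1 ∈ (⊥ : Ideal A).jacobson) :
    IsSingular ((u : A) * x * v) ↔ IsSingular x :=
  ⟨fun h => by
    simpa [mul_assoc] using h.units_mul_mul (Units.inv_sub_one_mem hu) (Units.inv_sub_one_mem hv),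
    fun h => h.units_mul_mul hu hv⟩

theorem isSingular_conj_mul_mul_iff {a b : A} (t : Aˣ) (ha : a - 1 ∈ (⊥ : Ideal A).jacobson)
    (hb : b - 1 ∈ (⊥ : Ideal A).jacobson) :
    IsSingular ((t : A) * a * x * b * ((t⁻¹ : Aˣ) : A)) ↔ IsSingular x := by
  lift a to Aˣ using Ideal.isUnit_of_sub_one_mem_jacobson_bot' ha
  lift b to Aˣ using Ideal.isUnit_of_sub_one_mem_jacobson_bot' hb
  rw [show (t : A) * a * x * b * ((t⁻¹ : Aˣ) : A) = t * (a * x * b) * ((t⁻¹ : Aˣ) : A) by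
    simp only [mul_assoc], isSingular_units_conj_iff, isSingular_units_mul_mul_iff ha hb]

end Singular

theorem orbit_preserves_singular_and_regular
    {F A : Type*} [Field F] [Ring A] [Algebra F A]
    (J : Ideal A) (hJ : J = (⊥ : Ideal A).jacobson)
    (S : Subalgebra F A) :
    (∀ x ∈ J, IsSingular x →
      ∀ t : Aˣ, (t : A) ∈ S → ((t⁻¹ : Aˣ) : A) ∈ S →
        ∀ a b : A, a - 1 ∈ J → b - 1 ∈ J →
          IsSingular ((t : A) * a * x * b * ((t⁻¹ : Aˣ) : A))) ∧
    (∀ x y : A, x ∈ J → SameOrbitJ J S x y →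
      (IsSingular x → IsSingular y) ∧ (¬ IsSingular x → ¬ IsSingular y)) := by
  subst hJ
  refine ⟨fun x _ hx t _ _ a b ha hb => (isSingular_conj_mul_mul_iff t ha hb).mpr hx, ?_⟩
  rintro x y - ⟨t, -, -, a, b, ha, hb, rfl⟩
  exact ⟨(isSingular_conj_mul_mul_iff t ha hb).mpr, mt (isSingular_conj_mul_mul_iff t ha hb).mp⟩
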